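/- arXiv:1705.10709 — 5 statements merged into one kernel-verified Lean document; each statement's English description precedes it below -/
import Mathlib

section
/- Let G be a directed graph and u a vertex. Let S be a 1-edge-out component of u with unique outgoing edge (x,y). Then u has a path to every vertex v in S contained entirely within S. -/
/-- The set of edges of `E` going from inside `S` to outside `S`. -/
def OutEdges {V : Type*} (E : Set (V × V)) (S : Set V) : Set (V × V) :=
  {e ∈ E | e.1 ∈ S ∧ e.2 ∉ S}

/-- `S` is a 1-edge-out component of `u`: a minimal set of vertices containing `u`
whose induced subgraph has at most one outgoing edge. -/
def IsOneEdgeOut {V : Type*} (E : Set (V × V)) (u : V) (S : Set V) : Prop :=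
  u ∈ S ∧ (OutEdges E S).Subsingleton ∧
    ∀ S' : Set V, S' ⊂ S → u ∈ S' → ¬ (OutEdges E S').Subsingleton

theorem stmt0 {V : Type*} (E : Set (V × V)) (u x y : V) (S : Set V)
    (hS : IsOneEdgeOut E u S) (hx : x ∈ S) (hy : y ∉ S)
    (hout : OutEdges E S = {(x, y)}) :
    ∀ v ∈ S, Relation.ReflTransGen (fun p q => p ∈ S ∧ q ∈ S ∧ (p, q) ∈ E) u v := by
  obtain ⟨huS, hsub, hmin⟩ := hS
  by_contra h
  push_neg at h
  obtain ⟨v, hvS, hv⟩ := h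
  set R : Set V := {w | Relation.ReflTransGen (fun p q => p ∈ S ∧ q ∈ S ∧ (p, q) ∈ E) u w}
    with hR
  have hRS : R ⊆ S := by
    intro w hw
    induction hw with
    | refl => exact huS
    | tail _ h ih => exact h.2.1
  have hRsub : R ⊂ S := ⟨hRS, fun hc => hv (hc hvS)⟩
  refine hmin R hRsub Relation.ReflTransGen.refl (hsub.anti ?_)
  rintro ⟨p, q⟩ ⟨heE, hpR, hqR⟩
  refine ⟨heE, hRS hpR, fun hqS => hqR ?_⟩
  exact Relation.ReflTransGen.tail hpR ⟨hRS hpR, hqS, heE⟩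
end

section
/- Let G be a directed graph and u a vertex. Let S be a 1-edge-out component of u with unique outgoing edge (x,y). Then there exist two edge-disjoint paths from u to x within S. -/
/-- `l` is a path from `a` to `b` in the digraph `E`, all of whose vertices lie in `S`. -/
def IsPathIn {V : Type*} (E : Set (V × V)) (S : Set V) (a b : V) (l : List V) : Prop :=
  l.head? = some a ∧ l.getLast? = some b ∧ (∀ w ∈ l, w ∈ S) ∧
    List.Chain' (fun p q => (p, q) ∈ E) l

/-- The (directed) edges used by a path given as a list of vertices. -/
def pathEdges {V : Type*} (l : List V) : List (V × V) := l.zip l.tail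

/-
Minimality of `S` says that every `T ⊆ S` containing `u` but not `x` sends at least two edges
into `S \ T`: an edge of `T` leaving `S` would be `(x, y)`, which starts outside `T`. This is the
cut condition of Menger's theorem for two edge-disjoint paths, proved here by Ford–Fulkerson.
A 0/1 flow from `u` to `x` of value at most one can be augmented, for otherwise the vertices
reachable from `u` in the residual graph would form such a `T` with at most one edge leaving it.
Two augmentations from the empty flow give a flow of value two, and following unused edges of a
flow out of `u` peels off a path to `x` and leaves a flow of value one less.
-/

open Finset Relation

theorem List.exists_nodup_isChain_cons_of_relationReflTransGen {α : Type*} {r : α → α → Prop}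
    {a b : α} (h : ReflTransGen r a b) :
    ∃ l, (a :: l).Nodup ∧ (a :: l).IsChain r ∧ (a :: l).getLast (cons_ne_nil _ _) = b := by
  induction h using ReflTransGen.head_induction_on with
  | refl => exact ⟨[], nodup_singleton _, .singleton _, rfl⟩
  | @head a c hac _ ih =>
    obtain ⟨l, hnd, hch, hlast⟩ := ih
    by_cases ha : a ∈ c :: l
    · obtain ⟨s, t, hst⟩ := append_of_mem ha
      rw [hst] at hnd hch
      refine ⟨t, hnd.sublist (sublist_append_right _ _), hch.suffix (suffix_append _ _), ?_⟩
      simpa [hst] using hlast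
    · exact ⟨c :: l, nodup_cons.2 ⟨ha, hnd⟩, hch.cons_cons hac, by rwa [getLast_cons_cons]⟩

section

variable {V : Type*}

def inducedEdges (E : Set (V × V)) (S : Set V) : Set (V × V) :=
  {e ∈ E | e.1 ∈ S ∧ e.2 ∈ S}

variable {E : Set (V × V)} {S : Set V}

lemma outEdges_subset_outEdges_inducedEdges {T : Set V} (hTS : T ⊆ S)
    (hout : ∀ e ∈ OutEdges E S, e.1 ∉ T) :
    OutEdges E T ⊆ OutEdges (inducedEdges E S) T := by
  rintro e ⟨he, h1, h2⟩
  by_cases h2S : e.2 ∈ S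
  · exact ⟨⟨he, hTS h1, h2S⟩, h1, h2⟩
  · exact absurd h1 (hout e ⟨he, hTS h1, h2S⟩)

lemma IsPathIn.singleton {a : V} (ha : a ∈ S) :
    IsPathIn E S a a [a] :=
  ⟨rfl, rfl, by simpa using ha, List.isChain_singleton a⟩

lemma IsPathIn.cons {a b c : V} {l : List V}
    (hl : IsPathIn E S b c l) (hab : (a, b) ∈ E) (ha : a ∈ S) : IsPathIn E S a c (a :: l) := by
  obtain ⟨hhead, hlast, hmem, hchain⟩ := hl
  obtain _ | ⟨b', t⟩ := l
  · simp at hhead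
  obtain rfl : b' = b := by simpa using hhead
  refine ⟨rfl, by rwa [List.getLast?_cons_cons], ?_, List.IsChain.cons_cons hab hchain⟩
  simpa [ha] using hmem

lemma pathEdges_cons_of_head? {a b : V} {l : List V} (h : l.head? = some b) :
    pathEdges (a :: l) = (a, b) :: pathEdges l := by
  obtain _ | ⟨b', t⟩ := l
  · simp at h
  · obtain rfl : b' = b := by simpa using h
    rfl

end

section

variable {V : Type*} [DecidableEq V]

def edgeNetOut (e : V × V) (v : V) : ℤ :=
  (if e.1 = v then 1 else 0) - (if e.2 = v then 1 else 0)

def netOut (F : Finset (V × V)) (v : V) : ℤ :=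
  ∑ e ∈ F, edgeNetOut e v

lemma edgeNetOut_self (a v : V) : edgeNetOut (a, a) v = 0 := sub_self _

lemma edgeNetOut_swap (e : V × V) (v : V) : edgeNetOut e.swap v = -edgeNetOut e v := by
  simp [edgeNetOut]

lemma edgeNetOut_add_edgeNetOut (a b c v : V) :
    edgeNetOut (a, b) v + edgeNetOut (b, c) v = edgeNetOut (a, c) v := by
  simp only [edgeNetOut]
  ring

lemma netOut_insert {F : Finset (V × V)} {e : V × V} (he : e ∉ F) (v : V) :
    netOut (insert e F) v = netOut F v + edgeNetOut e v := by
  rw [netOut, sum_insert he, add_comm, netOut]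

lemma netOut_erase {F : Finset (V × V)} {e : V × V} (he : e ∈ F) (v : V) :
    netOut (F.erase e) v = netOut F v - edgeNetOut e v :=
  sum_erase_eq_sub he

lemma exists_mem_fst_eq_of_netOut_pos {F : Finset (V × V)} {v : V} (h : 0 < netOut F v) :
    ∃ e ∈ F, e.1 = v := by
  by_contra! hF
  refine h.not_ge (sum_nonpos fun e he => ?_)
  simp only [edgeNetOut, if_neg (hF e he)]
  split_ifs <;> norm_num

lemma sum_netOut (F : Finset (V × V)) (W : Finset V) :
    ∑ v ∈ W, netOut F v = ∑ e ∈ F, ((if e.1 ∈ W then 1 else 0) - (if e.2 ∈ W then 1 else 0)) := by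
  simp only [netOut]
  rw [Finset.sum_comm]
  simp [edgeNetOut, sum_sub_distrib, sum_ite_eq]

lemma netOut_eq_card_leaving_sub_card_entering {F : Finset (V × V)} {T : Set V}
    [DecidablePred (· ∈ T)] {u : V} (hu : u ∈ T) (h0 : ∀ v ∈ T, v ≠ u → netOut F v = 0) :
    netOut F u =
      #(F.filter fun e => e.1 ∈ T ∧ e.2 ∉ T) - #(F.filter fun e => e.2 ∈ T ∧ e.1 ∉ T) := by
  set W := insert u ((F.image Prod.fst ∪ F.image Prod.snd).filter (· ∈ T))
  have hW : ∀ e ∈ F, (e.1 ∈ W ↔ e.1 ∈ T) ∧ (e.2 ∈ W ↔ e.2 ∈ T) := by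
    intro e he
    have hmem : ∀ w, w ∈ W ↔ w = u ∨ (w ∈ F.image Prod.fst ∪ F.image Prod.snd ∧ w ∈ T) := by
      simp [W]
    simp only [hmem, mem_union, mem_image_of_mem _ he, true_or, or_true, true_and]
    exact ⟨or_iff_right_of_imp (· ▸ hu), or_iff_right_of_imp (· ▸ hu)⟩
  calc netOut F u = ∑ v ∈ W, netOut F v := by
        refine (sum_eq_single_of_mem u (mem_insert_self _ _) fun v hv hvu => h0 v ?_ hvu).symm
        exact (mem_filter.1 ((mem_insert.1 hv).resolve_left hvu)).2
    _ = _ := by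
        rw [sum_netOut, ← sum_boole, ← sum_boole, ← sum_sub_distrib]
        refine sum_congr rfl fun e he => ?_
        simp only [(hW e he).1, (hW e he).2]
        by_cases h1 : e.1 ∈ T <;> by_cases h2 : e.2 ∈ T <;> simp [h1, h2]

variable {E : Set (V × V)} {S : Set V}

lemma exists_path_of_netOut (x : V) (F : Finset (V × V)) (a : V) (hF : ↑F ⊆ inducedEdges E S)
    (ha : a ∈ S) (hdiv : ∀ v, v ≠ x → (if a = v then 1 else 0) ≤ netOut F v) :
    ∃ l, IsPathIn E S a x l ∧ (∀ e ∈ pathEdges l, e ∈ F) ∧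
      ∀ v, netOut (F \ (pathEdges l).toFinset) v = netOut F v - edgeNetOut (a, x) v := by
  induction F using Finset.strongInduction generalizing a with
  | H F ih =>
  by_cases hax : a = x
  · subst hax
    exact ⟨[a], .singleton ha, by simp [pathEdges], by simp [pathEdges, edgeNetOut_self]⟩
  have hpos : 1 ≤ netOut F a := by simpa using hdiv a hax
  obtain ⟨⟨a', b⟩, hab, ha'⟩ := exists_mem_fst_eq_of_netOut_pos (by omega : 0 < netOut F a)
  obtain rfl : a = a' := ha'.symm
  have habS : (a, b) ∈ inducedEdges E S := hF hab
  have hdiv' : ∀ v, v ≠ x → (if b = v then 1 else 0) ≤ netOut (F.erase (a, b)) v := by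
    intro v hv
    have := hdiv v hv
    rw [netOut_erase hab, edgeNetOut]
    split_ifs at this ⊢ <;> omega
  obtain ⟨l, hl, hlF, hrest⟩ := ih _ (erase_ssubset hab) b
    (fun e he => hF (mem_of_mem_erase he)) habS.2.2 hdiv'
  have hedges : pathEdges (a :: l) = (a, b) :: pathEdges l := pathEdges_cons_of_head? hl.1
  refine ⟨a :: l, hl.cons habS.1 ha, ?_, fun v => ?_⟩
  · simp only [hedges, List.mem_cons, forall_eq_or_imp]
    exact ⟨hab, fun e he => mem_of_mem_erase (hlF e he)⟩
  · rw [hedges, List.toFinset_cons, sdiff_insert, ← erase_sdiff_comm, hrest, netOut_erase hab,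
      ← edgeNetOut_add_edgeNetOut a b x]
    ring

/-- A flow of value `k` from `u` to `x` inside `S` with unit capacities, given by its set of
saturated edges. -/
def IsFlow (E : Set (V × V)) (S : Set V) (u x : V) (k : ℤ) (F : Finset (V × V)) : Prop :=
  ↑F ⊆ inducedEdges E S ∧ ∀ v, netOut F v = k * edgeNetOut (u, x) v

lemma isFlow_empty (u x : V) : IsFlow E S u x 0 ∅ :=
  ⟨by simp, by simp [netOut]⟩

lemma IsFlow.exists_path {u x : V} {k : ℤ} {F : Finset (V × V)} (hF : IsFlow E S u x (k + 1) F)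
    (hk : 0 ≤ k) (hu : u ∈ S) :
    ∃ l, IsPathIn E S u x l ∧ (∀ e ∈ pathEdges l, e ∈ F) ∧
      IsFlow E S u x k (F \ (pathEdges l).toFinset) := by
  obtain ⟨l, hl, hlF, hrest⟩ := exists_path_of_netOut x F u hF.1 hu fun v hv => by
    rw [hF.2, edgeNetOut, if_neg (Ne.symm hv)]
    split_ifs <;> omega
  refine ⟨l, hl, hlF, fun e he => hF.1 (mem_sdiff.1 he).1, fun v => ?_⟩
  rw [hrest, hF.2]
  ring

def residualAdj (E : Set (V × V)) (S : Set V) (F : Finset (V × V)) (p q : V) : Prop :=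
  ((p, q) ∈ inducedEdges E S ∧ (p, q) ∉ F) ∨ (q, p) ∈ F

lemma exists_augment_step {F G : Finset (V × V)} {a b : V} (hG : ↑G ⊆ inducedEdges E S)
    (hstep : residualAdj E S F a b) (hab : (a, b) ∈ G ↔ (a, b) ∈ F)
    (hba : (b, a) ∈ G ↔ (b, a) ∈ F) :
    ∃ G' : Finset (V × V), ↑G' ⊆ inducedEdges E S ∧
      (∀ v, netOut G' v = netOut G v + edgeNetOut (a, b) v) ∧
      ∀ e, e ≠ (a, b) → e ≠ (b, a) → (e ∈ G' ↔ e ∈ G) := by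
  rcases hstep with ⟨habS, habF⟩ | hbaF
  · refine ⟨insert (a, b) G, ?_, netOut_insert (hab.not.2 habF), fun e h _ => ?_⟩
    · simpa [Set.insert_subset_iff] using ⟨habS, hG⟩
    · simp [h]
  · refine ⟨G.erase (b, a), fun e he => hG (mem_of_mem_erase he), fun v => ?_, fun e _ h => ?_⟩
    · rw [netOut_erase (hba.2 hbaF), sub_eq_add_neg, ← edgeNetOut_swap]
      rfl
    · simp [h]

lemma exists_augment_chain {F : Finset (V × V)} :
    ∀ (l : List V) (a : V) (G : Finset (V × V)), (a :: l).Nodup →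
      (a :: l).IsChain (residualAdj E S F) → ↑G ⊆ inducedEdges E S →
      (∀ p q, p ∈ l ∨ q ∈ l → ((p, q) ∈ G ↔ (p, q) ∈ F)) →
      ∃ G' : Finset (V × V), ↑G' ⊆ inducedEdges E S ∧
        ∀ v, netOut G' v = netOut G v + edgeNetOut (a, (a :: l).getLast (List.cons_ne_nil _ _)) v
  | [], a, G, _, _, hG, _ => ⟨G, hG, fun v => by simp [edgeNetOut_self]⟩
  | b :: t, a, G, hnd, hchain, hG, hagree => by
    obtain ⟨hat, hbt⟩ : a ∉ b :: t ∧ b ∉ t := by simp_all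
    obtain ⟨G₁, hG₁, hnet₁, hsame₁⟩ := exists_augment_step hG (List.isChain_cons_cons.1 hchain).1
      (hagree a b (by simp)) (hagree b a (by simp))
    have hagree₁ : ∀ p q, p ∈ t ∨ q ∈ t → ((p, q) ∈ G₁ ↔ (p, q) ∈ F) := by
      rintro p q hpq
      rw [hsame₁ (p, q) (by grind) (by grind)]
      exact hagree p q (by grind)
    obtain ⟨G', hG', hnet'⟩ := exists_augment_chain t b G₁ (List.nodup_cons.1 hnd).2
      (List.isChain_cons_cons.1 hchain).2 hG₁ hagree₁
    refine ⟨G', hG', fun v => ?_⟩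
    rw [hnet', hnet₁, add_assoc, edgeNetOut_add_edgeNetOut, List.getLast_cons_cons]

lemma exists_augment {F : Finset (V × V)} {a b : V} (hF : ↑F ⊆ inducedEdges E S)
    (h : ReflTransGen (residualAdj E S F) a b) :
    ∃ G : Finset (V × V), ↑G ⊆ inducedEdges E S ∧
      ∀ v, netOut G v = netOut F v + edgeNetOut (a, b) v := by
  obtain ⟨l, hnd, hchain, rfl⟩ := List.exists_nodup_isChain_cons_of_relationReflTransGen h
  exact exists_augment_chain l a F hnd hchain hF fun _ _ _ => Iff.rfl

lemma IsFlow.reflTransGen_residualAdj {u x : V} {k : ℤ} {F : Finset (V × V)}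
    (hF : IsFlow E S u x k F) (hk : k ≤ 1) (hu : u ∈ S)
    (hcut : ∀ T ⊆ S, u ∈ T → x ∉ T → ¬ (OutEdges (inducedEdges E S) T).Subsingleton) :
    ReflTransGen (residualAdj E S F) u x := by
  classical
  by_contra hux
  set T : Set V := {v | v ∈ S ∧ ReflTransGen (residualAdj E S F) u v}
  have huT : u ∈ T := ⟨hu, .refl⟩
  have hxT : x ∉ T := fun hx => hux hx.2
  have hclosed : ∀ p q, p ∈ T → residualAdj E S F p q → q ∈ T := by
    rintro p q ⟨-, hp⟩ hpq
    refine ⟨?_, hp.tail hpq⟩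
    rcases hpq with ⟨h, -⟩ | h
    · exact h.2.2
    · exact (hF.1 h).2.1
  refine hcut T (fun v hv => hv.1) huT hxT ?_
  -- Every edge leaving the residual component `T` of `u` is saturated and no edge of `F` enters
  -- it, so by conservation at most `netOut F u ≤ 1` edges leave it.
  have hsub : OutEdges (inducedEdges E S) T ⊆ ↑(F.filter fun e => e.1 ∈ T ∧ e.2 ∉ T) := by
    rintro e ⟨he, h1, h2⟩
    have heF : e ∈ F := by
      by_contra heF
      exact h2 (hclosed e.1 e.2 h1 (Or.inl ⟨he, heF⟩))
    simpa [heF] using ⟨h1, h2⟩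
  have hentering : F.filter (fun e => e.2 ∈ T ∧ e.1 ∉ T) = ∅ :=
    filter_eq_empty_iff.2 fun e he ⟨h2, h1⟩ => h1 (hclosed e.2 e.1 h2 (Or.inr he))
  have hcard := netOut_eq_card_leaving_sub_card_entering (F := F) huT fun v hv hvu => by
    simp [hF.2, edgeNetOut, Ne.symm hvu, show x ≠ v from fun h => hxT (h ▸ hv)]
  simp only [hentering, hF.2, edgeNetOut, show x ≠ u from fun h => hxT (h ▸ huT),
    if_true, if_false, sub_zero, mul_one, card_empty, Nat.cast_zero] at hcard
  have hle : #(F.filter fun e => e.1 ∈ T ∧ e.2 ∉ T) ≤ 1 := by omega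
  exact fun e₁ h₁ e₂ h₂ => card_le_one.1 hle _ (hsub h₁) _ (hsub h₂)

lemma IsFlow.exists_succ {u x : V} {k : ℤ} {F : Finset (V × V)} (hF : IsFlow E S u x k F)
    (hk : k ≤ 1) (hu : u ∈ S)
    (hcut : ∀ T ⊆ S, u ∈ T → x ∉ T → ¬ (OutEdges (inducedEdges E S) T).Subsingleton) :
    ∃ G, IsFlow E S u x (k + 1) G := by
  obtain ⟨G, hG, hnet⟩ := exists_augment hF.1 (hF.reflTransGen_residualAdj hk hu hcut)
  exact ⟨G, hG, fun v => by rw [hnet, hF.2]; ring⟩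

end

theorem exists_edge_disjoint_paths_of_cut {V : Type*} {E : Set (V × V)} {S : Set V} {u x : V}
    (hu : u ∈ S)
    (hcut : ∀ T ⊆ S, u ∈ T → x ∉ T → ¬ (OutEdges (inducedEdges E S) T).Subsingleton) :
    ∃ l₁ l₂ : List V, IsPathIn E S u x l₁ ∧ IsPathIn E S u x l₂ ∧
      ∀ e : V × V, e ∈ pathEdges l₁ → e ∉ pathEdges l₂ := by
  classical
  obtain ⟨F₁, hF₁⟩ := (isFlow_empty (E := E) (S := S) u x).exists_succ (by norm_num) hu hcut
  obtain ⟨F₂, hF₂⟩ := hF₁.exists_succ (by norm_num) hu hcut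
  obtain ⟨l₁, hl₁, -, hrest⟩ := hF₂.exists_path (by norm_num) hu
  obtain ⟨l₂, hl₂, hl₂F, -⟩ := hrest.exists_path le_rfl hu
  exact ⟨l₁, l₂, hl₁, hl₂, fun e he₁ he₂ => (mem_sdiff.1 (hl₂F e he₂)).2 (List.mem_toFinset.2 he₁)⟩

theorem stmt1_general {V : Type*} (E : Set (V × V)) (u x y : V) (S : Set V)
    (hS : IsOneEdgeOut E u S) (hx : x ∈ S)
    (hout : OutEdges E S = {(x, y)}) :
    ∃ l₁ l₂ : List V, IsPathIn E S u x l₁ ∧ IsPathIn E S u x l₂ ∧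
      ∀ e : V × V, e ∈ pathEdges l₁ → e ∉ pathEdges l₂ := by
  obtain ⟨hu, -, hmin⟩ := hS
  refine exists_edge_disjoint_paths_of_cut hu fun T hTS huT hxT hsub =>
    hmin T (hTS.ssubset_of_mem_notMem hx hxT) huT (hsub.anti ?_)
  refine outEdges_subset_outEdges_inducedEdges hTS fun e he => ?_
  rw [hout, Set.mem_singleton_iff] at he
  exact he ▸ hxT

theorem stmt1 {V : Type*} (E : Set (V × V)) (u x y : V) (S : Set V)
    (hS : IsOneEdgeOut E u S) (hx : x ∈ S) (hy : y ∉ S)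
    (hout : OutEdges E S = {(x, y)}) :
    ∃ l₁ l₂ : List V, IsPathIn E S u x l₁ ∧ IsPathIn E S u x l₂ ∧
      ∀ e : V × V, e ∈ pathEdges l₁ → e ∉ pathEdges l₂ :=
  stmt1_general E u x y S hS hx hout
end

section
/- Let T be a rooted tree (DFS tree) with root u, where each vertex v is assigned a nonnegative weight charge(v), and w(v) denotes the sum of charge over descendants of v (including v). If the total sum of charges is exactly 2Δ+1, then the set of vertices v with w(v) ≥ Δ+1 forms a path in T starting at the root. -/
open Classical

/-- `a` is an ancestor of `b` in the tree given by the parent map (every vertex is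
an ancestor of itself). -/
def IsAncestor {V : Type*} (parent : V → V) (a b : V) : Prop :=
  ∃ n : ℕ, parent^[n] b = a

/-! Vertices sharing a descendant are comparable, so the subtrees of two incomparable vertices are
disjoint and their weights add up to at most the total charge `2Δ + 1`; hence they cannot both
weigh `Δ + 1`. -/

theorem IsAncestor.or_of_common_descendant {V : Type*} {parent : V → V} {a b x : V}
    (ha : IsAncestor parent a x) (hb : IsAncestor parent b x) :
    IsAncestor parent a b ∨ IsAncestor parent b a := by
  obtain ⟨n, rfl⟩ := ha
  obtain ⟨m, rfl⟩ := hb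
  rcases le_total n m with h | h
  · exact .inr ⟨m - n, by rw [← Function.iterate_add_apply, Nat.sub_add_cancel h]⟩
  · exact .inl ⟨n - m, by rw [← Function.iterate_add_apply, Nat.sub_add_cancel h]⟩

theorem disjoint_descendants_of_not_comparable {V : Type*} [Fintype V] {parent : V → V}
    {a b : V} (h : ¬(IsAncestor parent a b ∨ IsAncestor parent b a)) :
    Disjoint (Finset.univ.filter (IsAncestor parent a))
      (Finset.univ.filter (IsAncestor parent b)) :=
  Finset.disjoint_filter.2 fun _ _ ha hb => h (ha.or_of_common_descendant hb)

theorem Finset.sum_add_sum_le_univ_sum_of_disjoint {ι : Type*} [Fintype ι] {s t : Finset ι}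
    (hst : Disjoint s t) (f : ι → ℕ) : ∑ i ∈ s, f i + ∑ i ∈ t, f i ≤ ∑ i, f i := by
  rw [← Finset.sum_union hst]
  exact Finset.sum_le_sum_of_subset (Finset.subset_univ _)

theorem stmt2_general {V : Type*} [Fintype V] (parent : V → V) (u : V)
    (charge : V → ℕ) (Δ : ℕ) (w : V → ℕ)
    (htree : ∀ v : V, IsAncestor parent u v)
    (hw : ∀ v : V, w v = ∑ x ∈ Finset.univ.filter (fun x => IsAncestor parent v x), charge x)
    (htotal : ∑ x : V, charge x = 2 * Δ + 1) :
    Δ + 1 ≤ w u ∧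
      ∀ v₁ v₂ : V, Δ + 1 ≤ w v₁ → Δ + 1 ≤ w v₂ →
        IsAncestor parent v₁ v₂ ∨ IsAncestor parent v₂ v₁ := by
  refine ⟨?_, fun v₁ v₂ h₁ h₂ => ?_⟩
  · rw [hw, Finset.filter_true_of_mem fun v _ => htree v, htotal]
    omega
  · by_contra hc
    have hle := Finset.sum_add_sum_le_univ_sum_of_disjoint
      (disjoint_descendants_of_not_comparable hc) charge
    rw [← hw, ← hw, htotal] at hle
    omega

theorem stmt2 {V : Type*} [Fintype V] (parent : V → V) (u : V)
    (charge : V → ℕ) (Δ : ℕ) (w : V → ℕ)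
    (hroot : parent u = u)
    (htree : ∀ v : V, IsAncestor parent u v)
    (hw : ∀ v : V, w v = ∑ x ∈ Finset.univ.filter (fun x => IsAncestor parent v x), charge x)
    (htotal : ∑ x : V, charge x = 2 * Δ + 1) :
    Δ + 1 ≤ w u ∧
      ∀ v₁ v₂ : V, Δ + 1 ≤ w v₁ → Δ + 1 ≤ w v₂ →
        IsAncestor parent v₁ v₂ ∨ IsAncestor parent v₂ v₁ :=
  stmt2_general parent u charge Δ w htree hw htotal
end

section
/- Let G be a digraph, C a set of vertices, and S a 1-edge-out component of some vertex u ∈ C within the induced subgraph G[C] that is not a 1-edge-out component of u in G. Then S contains an endpoint of an edge of G incident to C (i.e., an edge with exactly one endpoint in C). -/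
/-- The edges of `E` going from `S` to `C \ S`; these are the outgoing edges of `S`
in the subgraph of `E` induced by the vertex set `C`. -/
def OutEdgesIn {V : Type*} (E : Set (V × V)) (C S : Set V) : Set (V × V) :=
  {e ∈ E | e.1 ∈ S ∧ e.2 ∈ C ∧ e.2 ∉ S}

/-- `S` is a 1-edge-out component of `u` in the subgraph induced by `C`:
a minimal subset of `C` containing `u` with at most one outgoing edge in `G[C]`. -/
def IsOneEdgeOutIn {V : Type*} (E : Set (V × V)) (C : Set V) (u : V) (S : Set V) : Prop :=
  S ⊆ C ∧ u ∈ S ∧ (OutEdgesIn E C S).Subsingleton ∧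
    ∀ S' : Set V, S' ⊂ S → u ∈ S' → ¬ (OutEdgesIn E C S').Subsingleton

/-! If every edge leaving `S` ends in `C`, enlarging the ambient vertex set from `C` to `D`
adds no outgoing edge of `S`, while it can only add outgoing edges of the subsets of `S`;
so `S` stays a 1-edge-out component. Hence a component of `G[C]` that is not one of `G`
has an edge from `S` to a vertex outside `C`. -/

section

variable {V : Type*} {E : Set (V × V)} {C D S : Set V}

theorem outEdgesIn_mono (hCD : C ⊆ D) : OutEdgesIn E C S ⊆ OutEdgesIn E D S :=
  fun _ ⟨heE, h₁, h₂, h₃⟩ => ⟨heE, h₁, hCD h₂, h₃⟩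

theorem outEdgesIn_eq_of_edges_into (hCD : C ⊆ D)
    (hout : ∀ z ∈ S, ∀ w, (z, w) ∈ E → w ∈ C) :
    OutEdgesIn E D S = OutEdgesIn E C S :=
  (Set.Subset.antisymm (outEdgesIn_mono hCD)
    fun e ⟨heE, h₁, _, h₃⟩ => ⟨heE, h₁, hout e.1 h₁ e.2 heE, h₃⟩).symm

theorem IsOneEdgeOutIn.of_edges_into {u : V} (h : IsOneEdgeOutIn E C u S) (hCD : C ⊆ D)
    (hout : ∀ z ∈ S, ∀ w, (z, w) ∈ E → w ∈ C) : IsOneEdgeOutIn E D u S := by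
  obtain ⟨hSC, huS, hsub, hmin⟩ := h
  refine ⟨hSC.trans hCD, huS, outEdgesIn_eq_of_edges_into hCD hout ▸ hsub, ?_⟩
  intro S' hS' huS' hsub'
  exact hmin S' hS' huS' (hsub'.anti (outEdgesIn_mono hCD))

end

theorem stmt6 {V : Type*} (E : Set (V × V)) (C : Set V) (u : V) (S : Set V)
    (h₁ : IsOneEdgeOutIn E C u S)
    (h₂ : ¬ IsOneEdgeOutIn E Set.univ u S) :
    ∃ z ∈ S, ∃ w : V, w ∉ C ∧ ((z, w) ∈ E ∨ (w, z) ∈ E) := by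
  by_contra! h
  refine h₂ (h₁.of_edges_into (Set.subset_univ C) fun z hz w hzw => ?_)
  by_contra hw
  exact (h z hz w hw).1 hzw
end

section
/- Let G be a digraph and C a vertex set such that for every vertex u ∈ C, there is no 1-edge-out or 1-edge-in component of u in G[C] with at most Δ edges. Then one of the following holds: (a) G[C] is 2-edge-connected; (b) there exist two disjoint vertex sets A, B ⊂ C each inducing more than Δ edges that lie in different strongly connected components of G[C]; (c) G[C] is strongly connected and for every strong bridge e of G[C] there exist two disjoint vertex sets A, B ⊂ C each inducing more than Δ edges that are disconnected from each other in G[C] \ e. -/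
variable {V : Type*} [DecidableEq V]

/-- Edges from `S` to `C \ S` (outgoing edges of `S` in the subgraph induced by `C`). -/
def outEdges (E : Finset (V × V)) (C S : Finset V) : Finset (V × V) :=
  E.filter (fun e => e.1 ∈ S ∧ e.2 ∈ C ∧ e.2 ∉ S)

/-- Edges from `C \ S` to `S` (incoming edges of `S` in the subgraph induced by `C`). -/
def inEdges (E : Finset (V × V)) (C S : Finset V) : Finset (V × V) :=
  E.filter (fun e => e.1 ∈ C ∧ e.1 ∉ S ∧ e.2 ∈ S)

/-- Edges of the subgraph induced by `S`. -/
def innerEdges (E : Finset (V × V)) (S : Finset V) : Finset (V × V) :=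
  E.filter (fun e => e.1 ∈ S ∧ e.2 ∈ S)

/-- `S` is a 1-edge-out component of `u` in `G[C]` containing at most `Δ` edges. -/
def IsSmallOneEdgeOut (E : Finset (V × V)) (C S : Finset V) (u : V) (Δ : ℕ) : Prop :=
  S ⊆ C ∧ u ∈ S ∧ (outEdges E C S).card ≤ 1 ∧
    (∀ S' : Finset V, S' ⊂ S → u ∈ S' → 1 < (outEdges E C S').card) ∧
    (innerEdges E S).card ≤ Δ

/-- `S` is a 1-edge-in component of `u` in `G[C]` containing at most `Δ` edges. -/
def IsSmallOneEdgeIn (E : Finset (V × V)) (C S : Finset V) (u : V) (Δ : ℕ) : Prop :=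
  S ⊆ C ∧ u ∈ S ∧ (inEdges E C S).card ≤ 1 ∧
    (∀ S' : Finset V, S' ⊂ S → u ∈ S' → 1 < (inEdges E C S').card) ∧
    (innerEdges E S).card ≤ Δ

/-- Reachability by a path staying inside the vertex set `C`. -/
def ReachIn (E : Finset (V × V)) (C : Finset V) (a b : V) : Prop :=
  Relation.ReflTransGen (fun p q => p ∈ C ∧ q ∈ C ∧ (p, q) ∈ E) a b

/-- The subgraph induced by `C` is strongly connected. -/
def StronglyConnIn (E : Finset (V × V)) (C : Finset V) : Prop :=
  ∀ a ∈ C, ∀ b ∈ C, ReachIn E C a b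

theorem Finset.exists_minimal_mem_of_mem {α : Type*} (P : Finset α → Prop) {S : Finset α}
    {u : α} (hu : u ∈ S) (hS : P S) :
    ∃ M ⊆ S, u ∈ M ∧ P M ∧ ∀ S' ⊂ M, u ∈ S' → ¬ P S' := by
  induction S using Finset.strongInduction with
  | H S ih =>
    by_cases hsmaller : ∃ S' ⊂ S, u ∈ S' ∧ P S'
    · obtain ⟨S', hS'S, huS', hPS'⟩ := hsmaller
      obtain ⟨M, hMS', hM⟩ := ih S' hS'S huS' hPS'
      exact ⟨M, hMS'.trans hS'S.subset, hM⟩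
    · push Not at hsmaller
      exact ⟨S, subset_rfl, hu, hS, hsmaller⟩

section Reach

variable {E E' : Finset (V × V)} {C : Finset V}

lemma outEdges_reachSet_subset (a : V) [DecidablePred (ReachIn E' C a)] :
    outEdges E C (C.filter (ReachIn E' C a)) ⊆ E \ E' := by
  intro p hp
  simp only [outEdges, Finset.mem_filter] at hp
  obtain ⟨hpE, ⟨hp1C, hreach⟩, hp2C, hp2⟩ := hp
  exact Finset.mem_sdiff.mpr ⟨hpE, fun hpE' => hp2 ⟨hp2C, hreach.tail ⟨hp1C, hp2C, hpE'⟩⟩⟩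

lemma inEdges_coreachSet_subset (b : V) [DecidablePred (fun v => ReachIn E' C v b)] :
    inEdges E C (C.filter (fun v => ReachIn E' C v b)) ⊆ E \ E' := by
  intro p hp
  simp only [inEdges, Finset.mem_filter] at hp
  obtain ⟨hpE, hp1C, hp1, hp2C, hreach⟩ := hp
  exact Finset.mem_sdiff.mpr ⟨hpE, fun hpE' => hp1 ⟨hp1C, .head ⟨hp1C, hp2C, hpE'⟩ hreach⟩⟩

end Reach

section LargeSets

variable {E : Finset (V × V)} {C : Finset V} {Δ : ℕ}

/-- A minimal subset of `S` containing `a` with at most one outgoing edge is a 1-edge-out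
component of `a`, hence large. -/
lemma exists_large_subset_of_card_outEdges_le_one {a : V}
    (hsmall : ∀ S, ¬ IsSmallOneEdgeOut E C S a Δ) {S : Finset V} (ha : a ∈ S) (hSC : S ⊆ C)
    (hout : (outEdges E C S).card ≤ 1) :
    ∃ A ⊆ S, a ∈ A ∧ Δ < (innerEdges E A).card := by
  obtain ⟨A, hAS, haA, hAout, hAmin⟩ :=
    Finset.exists_minimal_mem_of_mem (fun T => (outEdges E C T).card ≤ 1) ha hout
  refine ⟨A, hAS, haA, lt_of_not_ge fun hle => hsmall A ?_⟩
  exact ⟨hAS.trans hSC, haA, hAout, fun S' hS' haS' => lt_of_not_ge (hAmin S' hS' haS'), hle⟩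

lemma exists_large_subset_of_card_inEdges_le_one {b : V}
    (hsmall : ∀ S, ¬ IsSmallOneEdgeIn E C S b Δ) {S : Finset V} (hb : b ∈ S) (hSC : S ⊆ C)
    (hin : (inEdges E C S).card ≤ 1) :
    ∃ B ⊆ S, b ∈ B ∧ Δ < (innerEdges E B).card := by
  obtain ⟨B, hBS, hbB, hBin, hBmin⟩ :=
    Finset.exists_minimal_mem_of_mem (fun T => (inEdges E C T).card ≤ 1) hb hin
  refine ⟨B, hBS, hbB, lt_of_not_ge fun hle => hsmall B ?_⟩
  exact ⟨hBS.trans hSC, hbB, hBin, fun S' hS' hbS' => lt_of_not_ge (hBmin S' hS' hbS'), hle⟩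

/-- If `G[C]` minus at most one edge is not strongly connected, say `a` does not reach `b`,
then a large set inside the vertices reachable from `a` and a large set inside the vertices
reaching `b` lie in different strongly connected components. -/
lemma exists_large_separated_of_not_stronglyConnIn {E' : Finset (V × V)}
    (h : ∀ u ∈ C, ∀ S : Finset V,
      ¬ IsSmallOneEdgeOut E C S u Δ ∧ ¬ IsSmallOneEdgeIn E C S u Δ)
    (hcard : (E \ E').card ≤ 1) (hnot : ¬ StronglyConnIn E' C) :
    ∃ A B : Finset V, A ⊆ C ∧ B ⊆ C ∧ Disjoint A B ∧
      Δ < (innerEdges E A).card ∧ Δ < (innerEdges E B).card ∧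
      ∀ a ∈ A, ∀ b ∈ B, ¬ (ReachIn E' C a b ∧ ReachIn E' C b a) := by
  classical
  simp only [StronglyConnIn, not_forall] at hnot
  obtain ⟨a, haC, b, hbC, hab⟩ := hnot
  obtain ⟨A, hA, haA, hAlarge⟩ := exists_large_subset_of_card_outEdges_le_one
    (fun S => (h a haC S).1) (Finset.mem_filter.mpr ⟨haC, .refl⟩) (Finset.filter_subset _ C)
    ((Finset.card_le_card (outEdges_reachSet_subset a)).trans hcard)
  obtain ⟨B, hB, hbB, hBlarge⟩ := exists_large_subset_of_card_inEdges_le_one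
    (fun S => (h b hbC S).2) (Finset.mem_filter.mpr ⟨hbC, .refl⟩) (Finset.filter_subset _ C)
    ((Finset.card_le_card (inEdges_coreachSet_subset b)).trans hcard)
  have hseparated : ∀ x ∈ A, ∀ y ∈ B, ¬ ReachIn E' C x y := fun x hx y hy hxy =>
    hab (((Finset.mem_filter.mp (hA hx)).2.trans hxy).trans (Finset.mem_filter.mp (hB hy)).2)
  refine ⟨A, B, hA.trans (Finset.filter_subset _ C), hB.trans (Finset.filter_subset _ C),
    Finset.disjoint_left.mpr fun x hxA hxB => hseparated x hxA x hxB .refl,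
    hAlarge, hBlarge, fun x hx y hy hxy => hseparated x hx y hy hxy.1⟩

end LargeSets

theorem stmt7_general (E : Finset (V × V)) (C : Finset V) (Δ : ℕ)
    (h : ∀ u ∈ C, ∀ S : Finset V,
      ¬ IsSmallOneEdgeOut E C S u Δ ∧ ¬ IsSmallOneEdgeIn E C S u Δ) :
    -- (a) G[C] is 2-edge-connected
    (StronglyConnIn E C ∧
        ∀ e ∈ innerEdges E C, StronglyConnIn (E.erase e) C) ∨
    -- (b) two large sets in different strongly connected components of G[C]
    (∃ A B : Finset V, A ⊆ C ∧ B ⊆ C ∧ Disjoint A B ∧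
        Δ < (innerEdges E A).card ∧ Δ < (innerEdges E B).card ∧
        ∀ a ∈ A, ∀ b ∈ B, ¬ (ReachIn E C a b ∧ ReachIn E C b a)) ∨
    -- (c) G[C] strongly connected and every strong bridge separates two large sets
    (StronglyConnIn E C ∧
      ∀ e ∈ innerEdges E C, ¬ StronglyConnIn (E.erase e) C →
        ∃ A B : Finset V, A ⊆ C ∧ B ⊆ C ∧ Disjoint A B ∧
          Δ < (innerEdges E A).card ∧ Δ < (innerEdges E B).card ∧
          ∀ a ∈ A, ∀ b ∈ B,
            ¬ (ReachIn (E.erase e) C a b ∧ ReachIn (E.erase e) C b a)) := by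
  by_cases hsc : StronglyConnIn E C
  · by_cases h2 : ∀ e ∈ innerEdges E C, StronglyConnIn (E.erase e) C
    · exact Or.inl ⟨hsc, h2⟩
    refine Or.inr (Or.inr ⟨hsc, fun e he hbridge => ?_⟩)
    have heE : e ∈ E := (Finset.mem_filter.mp he).1
    refine exists_large_separated_of_not_stronglyConnIn h ?_ hbridge
    rw [Finset.sdiff_erase_self heE, Finset.card_singleton]
  · refine Or.inr (Or.inl ?_)
    exact exists_large_separated_of_not_stronglyConnIn h (by simp) hsc

theorem stmt7 (E : Finset (V × V)) (C : Finset V) (Δ : ℕ) (hΔ : 0 < Δ)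
    (h : ∀ u ∈ C, ∀ S : Finset V,
      ¬ IsSmallOneEdgeOut E C S u Δ ∧ ¬ IsSmallOneEdgeIn E C S u Δ) :
    -- (a) G[C] is 2-edge-connected
    (StronglyConnIn E C ∧
        ∀ e ∈ innerEdges E C, StronglyConnIn (E.erase e) C) ∨
    -- (b) two large sets in different strongly connected components of G[C]
    (∃ A B : Finset V, A ⊆ C ∧ B ⊆ C ∧ Disjoint A B ∧
        Δ < (innerEdges E A).card ∧ Δ < (innerEdges E B).card ∧
        ∀ a ∈ A, ∀ b ∈ B, ¬ (ReachIn E C a b ∧ ReachIn E C b a)) ∨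
    -- (c) G[C] strongly connected and every strong bridge separates two large sets
    (StronglyConnIn E C ∧
      ∀ e ∈ innerEdges E C, ¬ StronglyConnIn (E.erase e) C →
        ∃ A B : Finset V, A ⊆ C ∧ B ⊆ C ∧ Disjoint A B ∧
          Δ < (innerEdges E A).card ∧ Δ < (innerEdges E B).card ∧
          ∀ a ∈ A, ∀ b ∈ B,
            ¬ (ReachIn (E.erase e) C a b ∧ ReachIn (E.erase e) C b a)) :=
  stmt7_general E C Δ h
end
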